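/- Adopt the FAVOR+S binding setup: fix integers D, M, N ≥ 1, a fixed channel (u, n) ∈ {1,…,M}×{1,…,N} and positions i, j; for each channel pair (m, w) ∈ {1,…,M}×{1,…,N} let k̄_j^{(m,w)} ∈ ℝ^D and q̄_i^{(m,w)} ∈ ℝ^D be fixed vectors and let a^{(m,w)} ∈ {−1,+1}^D be mutually independent random vectors with i.i.d. Rademacher entries; define k_j^{(m,w)} = k̄_j^{(m,w)} ⊙ a^{(m,w)} and q_i^{(m,w)} = q̄_i^{(m,w)} ⊙ a^{(m,w)}. Let α > 0, assume ⟨k̄_j^{(u,n)}, q̄_i^{(u,n)}⟩ ≠ 0, and let P = ℙ{ ⟨Σ_{w=1}^N k_j^{(u,w)}, Σ_{t=1}^M q_i^{(t,n)}⟩ ∉ [1−α, 1+α]·⟨k̄_j^{(u,n)}, q̄_i^{(u,n)}⟩ }. For (t, w) with (u, w) ≠ (t, n) set Ξ_{(u,w)}^{(t,n)} = α²·⟨k̄_j^{(u,n)}, q̄_i^{(u,n)}⟩² / Σ_{p=1}^D (k̄_j^{(u,w)})_p²·(q̄_i^{(t,n)})_p². Then P ≤ Σ_{(w,t) ∈ {1,…,N}×{1,…,M},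 (u,w) ≠ (t,n)} 1/Ξ_{(u,w)}^{(t,n)}. -/

import Mathlib

open MeasureTheory ProbabilityTheory
open scoped ENNReal NNReal

/-- The Rademacher distribution on `ℝ`: uniform on `{-1, +1}`. -/
noncomputable def rademacherMeasure : Measure ℝ :=
  (2 : ℝ≥0∞)⁻¹ • Measure.dirac (1 : ℝ) + (2 : ℝ≥0∞)⁻¹ • Measure.dirac (-1 : ℝ)

section Aux
variable {Ω : Type*} [MeasurableSpace Ω] {μ : Measure Ω} [IsProbabilityMeasure μ]

lemma myBddIntegrable {f : Ω → ℝ} (C : ℝ) (hf : Measurable f) (hb : ∀ ω, |f ω| ≤ C) :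
    Integrable f μ :=
  (integrable_const C).mono' hf.aestronglyMeasurable (Filter.Eventually.of_forall (by simpa using hb))

lemma rademacherMean {f : Ω → ℝ} (hm : Measurable f)
    (hd : Measure.map f μ = rademacherMeasure) : ∫ ω, f ω ∂μ = 0 := by
  have h1 : ∫ ω, f ω ∂μ = ∫ x, x ∂(Measure.map f μ) :=
    (integral_map hm.aemeasurable aestronglyMeasurable_id).symm
  rw [h1, hd, rademacherMeasure]
  have hi : ∀ b : ℝ, Integrable (fun x : ℝ => x) ((2 : ℝ≥0∞)⁻¹ • Measure.dirac b) := by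
    intro b
    refine Integrable.smul_measure ?_ (by simp)
    exact (integrable_const b).congr (ae_eq_dirac (fun x : ℝ => x)).symm
  rw [integral_add_measure (hi 1) (hi (-1)), integral_smul_measure, integral_smul_measure,
    integral_dirac, integral_dirac]
  simp

variable {ι : Type*} {e : ι → Ω → ℝ}

lemma e_abs (hval : ∀ i ω, e i ω = 1 ∨ e i ω = -1) (i : ι) (ω : Ω) : |e i ω| = 1 := by
  rcases hval i ω with h | h <;> rw [h] <;> norm_num

lemma e_sq (hval : ∀ i ω, e i ω = 1 ∨ e i ω = -1) (i : ι) (ω : Ω) : e i ω * e i ω = 1 := by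
  rcases hval i ω with h | h <;> rw [h] <;> norm_num

lemma e_integrable (hval : ∀ i ω, e i ω = 1 ∨ e i ω = -1) (hmeas : ∀ i, Measurable (e i))
    (i : ι) : Integrable (e i) μ :=
  myBddIntegrable 1 (hmeas i) (fun ω => (e_abs hval i ω).le)

lemma eprod_integrable (hval : ∀ i ω, e i ω = 1 ∨ e i ω = -1) (hmeas : ∀ i, Measurable (e i))
    (s : Finset ι) : Integrable (fun ω => ∏ i ∈ s, e i ω) μ := by
  refine myBddIntegrable 1 (Finset.measurable_prod s (fun i _ => hmeas i)) (fun ω => ?_)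
  rw [Finset.abs_prod]
  exact le_of_eq (Finset.prod_eq_one (fun i _ => e_abs hval i ω))

lemma eprod_zero (hval : ∀ i ω, e i ω = 1 ∨ e i ω = -1) (hmeas : ∀ i, Measurable (e i))
    (hindep : iIndepFun e μ)
    (hmean : ∀ i, ∫ ω, e i ω ∂μ = 0) {s : Finset ι} (hs : s.Nonempty) :
    ∫ ω, ∏ i ∈ s, e i ω ∂μ = 0 := by
  classical
  obtain ⟨i, hi⟩ := hs
  have h1 : IndepFun (∏ j ∈ s.erase i, e j) (e i) μ :=
    hindep.indepFun_finsetProd_of_notMem hmeas (Finset.notMem_erase i s)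
  have h2 := h1.integral_mul_eq_mul_integral
    ((eprod_integrable hval hmeas (s.erase i)).congr
      (Filter.Eventually.of_forall (fun ω => (Finset.prod_apply ω _ e).symm))).aestronglyMeasurable
    (e_integrable hval hmeas i).aestronglyMeasurable
  have h3 : ∀ ω, ∏ j ∈ s, e j ω = ((∏ j ∈ s.erase i, e j) * e i) ω := by
    intro ω
    simp only [Pi.mul_apply, Finset.prod_apply]
    rw [Finset.prod_erase_mul _ _ hi]
  have h4 : ∫ ω, e i ω ∂μ = 0 := hmean i
  calc ∫ ω, ∏ j ∈ s, e j ω ∂μ = ∫ ω, ((∏ j ∈ s.erase i, e j) * e i) ω ∂μ := by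
        simp only [h3]
    _ = (∫ ω, (∏ j ∈ s.erase i, e j) ω ∂μ) * ∫ ω, e i ω ∂μ := h2
    _ = 0 := by rw [h4, mul_zero]

lemma epair_zero (hval : ∀ i ω, e i ω = 1 ∨ e i ω = -1) (hmeas : ∀ i, Measurable (e i))
    (hindep : iIndepFun e μ)
    (hmean : ∀ i, ∫ ω, e i ω ∂μ = 0) {i j : ι} (hij : i ≠ j) :
    ∫ ω, e i ω * e j ω ∂μ = 0 := by
  have h1 : IndepFun (e i) (e j) μ := hindep.indepFun hij
  have h2 := h1.integral_mul_eq_mul_integral (e_integrable hval hmeas i).aestronglyMeasurable (e_integrable hval hmeas j).aestronglyMeasurable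
  have h3 : ∫ ω, e i ω * e j ω ∂μ = (∫ ω, e i ω ∂μ) * ∫ ω, e j ω ∂μ := h2
  rw [h3, hmean i, zero_mul]

lemma equad_zero (hval : ∀ i ω, e i ω = 1 ∨ e i ω = -1) (hmeas : ∀ i, Measurable (e i))
    (hindep : iIndepFun e μ)
    (hmean : ∀ i, ∫ ω, e i ω ∂μ = 0) {i1 i2 i3 i4 : ι} (h12 : i1 ≠ i2) (h34 : i3 ≠ i4)
    (hne : ¬(i1 = i3 ∧ i2 = i4)) (hne2 : ¬(i1 = i4 ∧ i2 = i3)) :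
    ∫ ω, e i1 ω * e i2 ω * e i3 ω * e i4 ω ∂μ = 0 := by
  classical
  by_cases h13 : i1 = i3
  · have h24 : i2 ≠ i4 := fun h => hne ⟨h13, h⟩
    have hpt : ∀ ω, e i1 ω * e i2 ω * e i3 ω * e i4 ω = e i2 ω * e i4 ω := by
      intro ω; rw [← h13]; rcases hval i1 ω with h | h <;> rw [h] <;> ring
    simp only [hpt]
    exact epair_zero hval hmeas hindep hmean h24
  · by_cases h14 : i1 = i4
    · have h23 : i2 ≠ i3 := fun h => hne2 ⟨h14, h⟩
      have hpt : ∀ ω, e i1 ω * e i2 ω * e i3 ω * e i4 ω = e i2 ω * e i3 ω := by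
        intro ω; rw [← h14]; rcases hval i1 ω with h | h <;> rw [h] <;> ring
      simp only [hpt]
      exact epair_zero hval hmeas hindep hmean h23
    · by_cases h23 : i2 = i3
      · have hpt : ∀ ω, e i1 ω * e i2 ω * e i3 ω * e i4 ω = e i1 ω * e i4 ω := by
          intro ω; rw [← h23]; rcases hval i2 ω with h | h <;> rw [h] <;> ring
        simp only [hpt]
        exact epair_zero hval hmeas hindep hmean h14
      · by_cases h24 : i2 = i4
        · have hpt : ∀ ω, e i1 ω * e i2 ω * e i3 ω * e i4 ω = e i1 ω * e i3 ω := by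
            intro ω; rw [← h24]; rcases hval i2 ω with h | h <;> rw [h] <;> ring
          simp only [hpt]
          exact epair_zero hval hmeas hindep hmean h13
        · have hpt : ∀ ω, e i1 ω * e i2 ω * e i3 ω * e i4 ω
              = ∏ i ∈ ({i1, i2, i3, i4} : Finset ι), e i ω := by
            intro ω
            rw [Finset.prod_insert (by simp [h12, h13, h14]),
              Finset.prod_insert (by simp [h23, h24]),
              Finset.prod_insert (by simp [h34]), Finset.prod_singleton]
            ring
          simp only [hpt]
          exact eprod_zero hval hmeas hindep hmean ⟨i1, by simp⟩

end Aux
/-- `Ξ = α²·c² / ∑_p (k̄)_p²·(q̄)_p²` where `c` is the intended signal. -/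
noncomputable def Xi (D : ℕ) (α c : ℝ) (kb qb : Fin D → ℝ) : ℝ :=
  α ^ 2 * c ^ 2 / ∑ p, (kb p) ^ 2 * (qb p) ^ 2

/-- **FAVOR+S inter-channel noise, Chebyshev bound.**
`P ≤ ∑_{(w,t), (u,w)≠(t,n)} 1/Ξ_{(u,w)}^{(t,n)}`. -/
theorem stmt_10 {Ω : Type*} [MeasurableSpace Ω] (μ : Measure Ω) [IsProbabilityMeasure μ]
    (D M N : ℕ) (hD : 1 ≤ D) (hM : 1 ≤ M) (hN : 1 ≤ N)
    (u : Fin M) (n : Fin N)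
    (kbar qbar : Fin M × Fin N → Fin D → ℝ)
    (a : Fin M × Fin N → Ω → Fin D → ℝ)
    (haval : ∀ c ω d, a c ω d = 1 ∨ a c ω d = -1)
    (hameas : ∀ c d, Measurable fun ω => a c ω d)
    (hindep : iIndepFun
      (fun (p : (Fin M × Fin N) × Fin D) ω => a p.1 ω p.2) μ)
    (hadist : ∀ c d, Measure.map (fun ω => a c ω d) μ = rademacherMeasure)
    (α : ℝ) (hα : 0 < α)
    (hsig : (∑ d, kbar (u, n) d * qbar (u, n) d) ≠ 0) :
    μ {ω | (∑ d, (∑ w, kbar (u, w) d * a (u, w) ω d) * (∑ t, qbar (t, n) d * a (t, n) ω d)) ∉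
        (fun s => s * ∑ d, kbar (u, n) d * qbar (u, n) d) '' Set.Icc (1 - α) (1 + α)} ≤
      ENNReal.ofReal (∑ p ∈ (Finset.univ : Finset (Fin N × Fin M)).filter
          (fun p => ((u, p.1) : Fin M × Fin N) ≠ (p.2, n)),
        1 / Xi D α (∑ d, kbar (u, n) d * qbar (u, n) d) (kbar (u, p.1)) (qbar (p.2, n))) := by
  classical
  have hval : ∀ (i : (Fin M × Fin N) × Fin D) (ω : Ω), a i.1 ω i.2 = 1 ∨ a i.1 ω i.2 = -1 :=
    fun i ω => haval i.1 ω i.2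
  have hmeas : ∀ (i : (Fin M × Fin N) × Fin D), Measurable (fun ω => a i.1 ω i.2) :=
    fun i => hameas i.1 i.2
  have hmean : ∀ (i : (Fin M × Fin N) × Fin D), ∫ ω, a i.1 ω i.2 ∂μ = 0 :=
    fun i => rademacherMean (hameas i.1 i.2) (hadist i.1 i.2)
  set c : ℝ := ∑ d, kbar (u, n) d * qbar (u, n) d with hcdef
  have hε : (0:ℝ) < α ^ 2 * c ^ 2 := by
    have h1 : (0:ℝ) < c ^ 2 := by positivity
    positivity
  set P : Finset (Fin N × Fin M) :=
    Finset.univ.filter (fun p => ((u, p.1) : Fin M × Fin N) ≠ (p.2, n)) with hPdef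
  have hmemP : ∀ p ∈ P, ((u, p.1) : Fin M × Fin N) ≠ (p.2, n) := by
    intro p hp; exact (Finset.mem_filter.mp hp).2
  set X : Fin N × Fin M → Ω → ℝ := fun p ω =>
    ∑ d, kbar (u, p.1) d * qbar (p.2, n) d * (a (u, p.1) ω d * a (p.2, n) ω d) with hXdef
  set Y : Ω → ℝ := fun ω => ∑ p ∈ P, X p ω with hYdef
  set V : Fin N × Fin M → ℝ := fun p =>
    ∑ d, (kbar (u, p.1) d) ^ 2 * (qbar (p.2, n) d) ^ 2 with hVdef
  -- Step A : decomposition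
  have hS : ∀ ω, (∑ d, (∑ w, kbar (u, w) d * a (u, w) ω d) * (∑ t, qbar (t, n) d * a (t, n) ω d))
      = c + Y ω := by
    intro ω
    have h1 : ∀ d : Fin D, (∑ w, kbar (u, w) d * a (u, w) ω d) *
        (∑ t, qbar (t, n) d * a (t, n) ω d)
        = ∑ w, ∑ t, kbar (u, w) d * qbar (t, n) d * (a (u, w) ω d * a (t, n) ω d) := by
      intro d
      rw [Finset.sum_mul_sum]
      exact Finset.sum_congr rfl (fun w _ => Finset.sum_congr rfl (fun t _ => by ring))
    have key : (∑ d, (∑ w, kbar (u, w) d * a (u, w) ω d) * (∑ t, qbar (t, n) d * a (t, n) ω d))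
        = ∑ p : Fin N × Fin M, X p ω := by
      calc (∑ d, (∑ w, kbar (u, w) d * a (u, w) ω d) * (∑ t, qbar (t, n) d * a (t, n) ω d))
          = ∑ d : Fin D, ∑ w : Fin N, ∑ t : Fin M,
              kbar (u, w) d * qbar (t, n) d * (a (u, w) ω d * a (t, n) ω d) :=
            Finset.sum_congr rfl (fun d _ => h1 d)
        _ = ∑ w : Fin N, ∑ d : Fin D, ∑ t : Fin M,
              kbar (u, w) d * qbar (t, n) d * (a (u, w) ω d * a (t, n) ω d) :=
            Finset.sum_comm
        _ = ∑ w : Fin N, ∑ t : Fin M, ∑ d : Fin D,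
              kbar (u, w) d * qbar (t, n) d * (a (u, w) ω d * a (t, n) ω d) :=
            Finset.sum_congr rfl (fun w _ => Finset.sum_comm)
        _ = ∑ p : Fin N × Fin M, X p ω := by
            rw [Fintype.sum_prod_type]
    have hfilt : Finset.univ.filter
        (fun p : Fin N × Fin M => ¬ ((u, p.1) : Fin M × Fin N) ≠ (p.2, n)) = {(n, u)} := by
      ext p
      simp only [Finset.mem_filter, Finset.mem_univ, true_and, not_not, Prod.mk.injEq,
        Finset.mem_singleton, Prod.ext_iff]
      constructor
      · rintro ⟨h1, h2⟩; exact ⟨h2, h1.symm⟩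
      · rintro ⟨h1, h2⟩; exact ⟨h2.symm, h1⟩
    have hsplit := Finset.sum_filter_add_sum_filter_not Finset.univ
      (fun p : Fin N × Fin M => ((u, p.1) : Fin M × Fin N) ≠ (p.2, n)) (fun p => X p ω)
    rw [hfilt, Finset.sum_singleton] at hsplit
    have hXnu : X (n, u) ω = c := by
      rw [hcdef]
      refine Finset.sum_congr rfl (fun d _ => ?_)
      rw [e_sq hval ((u, n), d) ω, mul_one]
    rw [key, ← hsplit, hXnu]
    ring
  -- measurability and bounds
  have hXmeas : ∀ p, Measurable (X p) := by
    intro p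
    exact Finset.measurable_sum _ (fun d _ => by
      exact (measurable_const.mul ((hameas _ d).mul (hameas _ d))))
  have hXbd : ∀ p ω, |X p ω| ≤ ∑ d, |kbar (u, p.1) d * qbar (p.2, n) d| := by
    intro p ω
    refine (Finset.abs_sum_le_sum_abs _ _).trans (Finset.sum_le_sum (fun d _ => ?_))
    rw [abs_mul, abs_mul]
    have h1 : |a (u, p.1) ω d| = 1 := e_abs hval ((u, p.1), d) ω
    have h2 : |a (p.2, n) ω d| = 1 := e_abs hval ((p.2, n), d) ω
    rw [abs_mul, h1, h2]
    norm_num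
  have hYmeas : Measurable Y := Finset.measurable_sum _ (fun p _ => hXmeas p)
  set B : ℝ := ∑ p ∈ P, ∑ d, |kbar (u, p.1) d * qbar (p.2, n) d| with hBdef
  have hYbd : ∀ ω, |Y ω| ≤ B :=
    fun ω => (Finset.abs_sum_le_sum_abs _ _).trans (Finset.sum_le_sum (fun p _ => hXbd p ω))
  have hY2int : Integrable (fun ω => (Y ω) ^ 2) μ := by
    refine myBddIntegrable (B ^ 2) (hYmeas.pow_const 2) (fun ω => ?_)
    rw [abs_pow]
    nlinarith [hYbd ω, abs_nonneg (Y ω)]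
  -- Step B : event inclusion
  have hsub : {ω | (∑ d, (∑ w, kbar (u, w) d * a (u, w) ω d) *
        (∑ t, qbar (t, n) d * a (t, n) ω d)) ∉
        (fun s => s * c) '' Set.Icc (1 - α) (1 + α)}
      ⊆ {ω | α ^ 2 * c ^ 2 ≤ (Y ω) ^ 2} := by
    intro ω hω
    by_contra hcon
    apply hω
    simp only [Set.mem_setOf_eq, not_le] at hcon
    have hcpos : 0 < |c| := abs_pos.mpr hsig
    have hYlt : |Y ω| < α * |c| := by
      nlinarith [abs_nonneg (Y ω), sq_abs (Y ω), sq_abs c, mul_pos hα hcpos]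
    have h2 : |Y ω / c| ≤ α := by
      rw [abs_div, div_le_iff₀ hcpos]
      linarith
    have h3 := abs_le.mp h2
    refine ⟨1 + Y ω / c, Set.mem_Icc.mpr ⟨by linarith [h3.1], by linarith [h3.2]⟩, ?_⟩
    show (1 + Y ω / c) * c = _
    have h4 : (1 + Y ω / c) * c = c + Y ω := by field_simp
    rw [h4]
    exact (hS ω).symm
  -- Step D : second moment
  have hXXint : ∀ p q, Integrable (fun ω => X p ω * X q ω) μ := by
    intro p q
    refine myBddIntegrable ((∑ d, |kbar (u, p.1) d * qbar (p.2, n) d|) *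
      (∑ d, |kbar (u, q.1) d * qbar (q.2, n) d|)) ((hXmeas p).mul (hXmeas q)) (fun ω => ?_)
    rw [abs_mul]
    exact mul_le_mul (hXbd p ω) (hXbd q ω) (abs_nonneg _) ((abs_nonneg _).trans (hXbd p ω))
  have hquadint : ∀ (K : ℝ) (i1 i2 i3 i4 : (Fin M × Fin N) × Fin D),
      Integrable (fun ω => K * (a i1.1 ω i1.2 * a i2.1 ω i2.2 * a i3.1 ω i3.2 * a i4.1 ω i4.2)) μ := by
    intro K i1 i2 i3 i4
    refine myBddIntegrable |K| (measurable_const.mul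
      ((((hmeas i1).mul (hmeas i2)).mul (hmeas i3)).mul (hmeas i4))) (fun ω => ?_)
    simp only [abs_mul, e_abs hval]
    norm_num
  have hexp : ∀ (p q : Fin N × Fin M) (ω : Ω), X p ω * X q ω
      = ∑ d : Fin D, ∑ d' : Fin D,
        (kbar (u, p.1) d * qbar (p.2, n) d * (kbar (u, q.1) d' * qbar (q.2, n) d')) *
        (a (u, p.1) ω d * a (p.2, n) ω d * a (u, q.1) ω d' * a (q.2, n) ω d') := by
    intro p q ω
    simp only [hXdef]
    rw [Finset.sum_mul_sum]
    exact Finset.sum_congr rfl (fun d _ => Finset.sum_congr rfl (fun d' _ => by ring))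
  have hXXexp : ∀ (p q : Fin N × Fin M), ∫ ω, X p ω * X q ω ∂μ
      = ∑ d : Fin D, ∑ d' : Fin D,
        (kbar (u, p.1) d * qbar (p.2, n) d * (kbar (u, q.1) d' * qbar (q.2, n) d')) *
        ∫ ω, a (u, p.1) ω d * a (p.2, n) ω d * a (u, q.1) ω d' * a (q.2, n) ω d' ∂μ := by
    intro p q
    simp only [hexp p q]
    rw [integral_finset_sum _ (fun d _ => integrable_finset_sum _
      (fun d' _ => hquadint _ ((u, p.1), d) ((p.2, n), d) ((u, q.1), d') ((q.2, n), d')))]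
    refine Finset.sum_congr rfl (fun d _ => ?_)
    rw [integral_finset_sum _
      (fun d' _ => hquadint _ ((u, p.1), d) ((p.2, n), d) ((u, q.1), d') ((q.2, n), d'))]
    exact Finset.sum_congr rfl (fun d' _ => integral_const_mul _ _)
  have hcross : ∀ p ∈ P, ∀ q ∈ P, p ≠ q → ∫ ω, X p ω * X q ω ∂μ = 0 := by
    rintro ⟨w, t⟩ hp ⟨w', t'⟩ hq hpq
    rw [hXXexp]
    refine Finset.sum_eq_zero (fun d _ => Finset.sum_eq_zero (fun d' _ => ?_))
    have hp' := hmemP _ hp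
    have hq' := hmemP _ hq
    simp only at hp' hq' ⊢
    have h0 : ∫ ω, a (u, w) ω d * a (t, n) ω d * a (u, w') ω d' * a (t', n) ω d' ∂μ = 0 := by
      refine equad_zero hval hmeas hindep hmean
        (i1 := ((u, w), d)) (i2 := ((t, n), d)) (i3 := ((u, w'), d')) (i4 := ((t', n), d'))
        ?_ ?_ ?_ ?_
      · intro h; exact hp' (congrArg Prod.fst h)
      · intro h; exact hq' (congrArg Prod.fst h)
      · rintro ⟨h1, h2⟩
        exact hpq (Prod.ext (congrArg (fun x => x.1.2) h1) (congrArg (fun x => x.1.1) h2))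
      · rintro ⟨h1, h2⟩
        exact hpq (Prod.ext
          ((congrArg (fun x => x.1.2) h1).trans (congrArg (fun x => x.1.2) h2))
          ((congrArg (fun x => x.1.1) h2).trans (congrArg (fun x => x.1.1) h1)))
    rw [h0, mul_zero]
  have hdiag : ∀ p ∈ P, ∫ ω, X p ω * X p ω ∂μ = V p := by
    rintro ⟨w, t⟩ hp
    have hp' := hmemP _ hp
    simp only at hp'
    rw [hXXexp]
    rw [hVdef]
    refine Finset.sum_congr rfl (fun d _ => ?_)
    simp only
    rw [Finset.sum_eq_single_of_mem d (Finset.mem_univ d)]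
    · have h1 : ∀ ω, a (u, w) ω d * a (t, n) ω d * a (u, w) ω d * a (t, n) ω d = 1 := by
        intro ω
        rcases haval (u, w) ω d with h | h <;> rcases haval (t, n) ω d with h' | h' <;>
          rw [h, h'] <;> norm_num
      simp only [h1]
      rw [integral_const]
      simp only [probReal_univ, one_smul]
      ring
    · intro d' _ hd'
      have h0 : ∫ ω, a (u, w) ω d * a (t, n) ω d * a (u, w) ω d' * a (t, n) ω d' ∂μ = 0 := by
        refine equad_zero hval hmeas hindep hmean
          (i1 := ((u, w), d)) (i2 := ((t, n), d)) (i3 := ((u, w), d')) (i4 := ((t, n), d'))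
          ?_ ?_ ?_ ?_
        · intro h; exact hp' (congrArg Prod.fst h)
        · intro h; exact hp' (congrArg Prod.fst h)
        · rintro ⟨h1, _⟩
          exact hd' (congrArg Prod.snd h1).symm
        · rintro ⟨h1, _⟩
          exact hp' (congrArg Prod.fst h1)
      rw [h0, mul_zero]
  have hsecond : ∫ ω, (Y ω) ^ 2 ∂μ = ∑ p ∈ P, V p := by
    have hY2 : ∀ ω, (Y ω) ^ 2 = ∑ p ∈ P, ∑ q ∈ P, X p ω * X q ω := by
      intro ω
      simp only [hYdef]
      rw [sq, Finset.sum_mul_sum]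
    simp only [hY2]
    rw [integral_finset_sum _ (fun p _ => integrable_finset_sum _ (fun q _ => hXXint p q))]
    refine Finset.sum_congr rfl (fun p hp => ?_)
    rw [integral_finset_sum _ (fun q _ => hXXint p q)]
    rw [Finset.sum_eq_single_of_mem p hp
      (fun q hq hqp => hcross p hp q hq (fun h => hqp h.symm))]
    exact hdiag p hp
  -- Step C : Markov / Chebyshev
  have hmar := mul_meas_ge_le_integral_of_nonneg
    (Filter.Eventually.of_forall (fun ω => sq_nonneg (Y ω))) hY2int (α ^ 2 * c ^ 2)
  have htoReal : (μ {ω | α ^ 2 * c ^ 2 ≤ (Y ω) ^ 2}).toReal ≤ (∑ p ∈ P, V p) / (α ^ 2 * c ^ 2) := by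
    rw [le_div_iff₀ hε, ← hsecond]
    exact (mul_comm _ _).trans_le hmar
  have hRHS : (∑ p ∈ P, 1 / Xi D α c (kbar (u, p.1)) (qbar (p.2, n)))
      = (∑ p ∈ P, V p) / (α ^ 2 * c ^ 2) := by
    rw [Finset.sum_div]
    refine Finset.sum_congr rfl (fun p _ => ?_)
    rw [Xi, one_div_div]
  have h1 : μ {ω | α ^ 2 * c ^ 2 ≤ (Y ω) ^ 2}
      ≤ ENNReal.ofReal ((∑ p ∈ P, V p) / (α ^ 2 * c ^ 2)) := by
    rw [← ENNReal.ofReal_toReal (measure_ne_top μ {ω | α ^ 2 * c ^ 2 ≤ (Y ω) ^ 2})]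
    exact ENNReal.ofReal_le_ofReal htoReal
  refine le_trans (measure_mono hsub) ?_
  rw [hRHS]
  exact h1
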